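/- Comparison/uniqueness via the mean value theorem and maximum principle: Let a, b, r satisfy the conditions of the maximum principle (a > 0 bounded, b bounded, r ≥ 0 bounded) and ν a Lévy measure with ∫_{|y|≤1} y² ν(dy) < ∞, ∫_{|y|>1}|y| ν(dy) < ∞. Let p : ℝ → ℝ be C¹ with p' ≥ 0 everywhere, and g : ℝ → ℝ a fixed function. If v₁ and v₂ are bounded classical (C^{2,1} ∩ C⁰) solutions on ℝ × [0,T] of ∂_t v − a ∂²_{xx} v − b ∂_x v − I v + r v + p(v − g) = 0 with v₁(·,0) = v₂(·,0), then v₁ = v₂ on ℝ × [0,T]. -/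

import Mathlib

/-!
Set `w = v₁ - v₂`. Where `w > 0`, monotonicity of `p` (from `p' ≥ 0`) and `r ≥ 0` turn the
difference of the two equations into the subsolution inequality
`∂ₜw ≤ a ∂²ₓw + b ∂ₓw + I w`, and the maximum principle gives `w ≤ 0`; by symmetry `v₁ = v₂`.

For the maximum principle, compare `w` with the barrier `ε (⟨x⟩ + K t)`, where
`⟨x⟩ = √(1 + x²)`. Since `w` is bounded and `⟨x⟩ ≥ |x|`, the difference attains its maximum on
`ℝ × [0, T]`; if that maximum were positive it would lie at some `t₀ > 0`, where
`∂ₜw ≥ ε K`, while `a ∂²ₓw + b ∂ₓw + I w ≤ ε (Ma + Mb + ∫ min(y², |y|) dν)`, because `⟨·⟩` has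
first and second derivatives bounded by `1`. Taking `K > Ma + Mb + ∫ min(y², |y|) dν` gives a
contradiction, and letting `ε → 0` gives `w ≤ 0`.
-/

open MeasureTheory Set Filter Topology

theorem HasDerivAt.nonneg_of_isMaxOn_Icc {f : ℝ → ℝ} {f' a t : ℝ} (hf : HasDerivAt f f' t)
    (hat : a < t) (hmax : IsMaxOn f (Icc a t) t) : 0 ≤ f' := by
  have hcone : a - t ∈ posTangentConeAt (Icc a t) t :=
    sub_mem_posTangentConeAt_of_segment_subset (by rw [segment_symm, segment_eq_Icc hat.le])
  have := hmax.localize.hasFDerivWithinAt_nonpos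
    hf.hasDerivWithinAt.hasFDerivWithinAt hcone
  simp only [ContinuousLinearMap.toSpanSingleton_apply, smul_eq_mul] at this
  exact nonneg_of_mul_nonpos_right this (sub_neg.2 hat)

theorem IsLocalMax.nonpos_of_hasDerivAt_of_hasDerivAt {f f' : ℝ → ℝ} {x d : ℝ}
    (hmax : IsLocalMax f x) (hf : ∀ z, HasDerivAt f (f' z) z) (hf' : HasDerivAt f' d x) :
    d ≤ 0 := by
  -- by the second derivative test `x` would also be a local minimum, so `f` is locally constant
  by_contra! hd
  have hderiv : deriv f = f' := funext fun z => (hf z).deriv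
  have hmin : IsLocalMin f x := isLocalMin_of_deriv_deriv_pos
    (by rwa [hderiv, hf'.deriv]) (by rw [hderiv, ← (hf x).deriv, hmax.deriv_eq_zero])
    (hf x).continuousAt
  have hconst : f =ᶠ[𝓝 x] fun _ => f x :=
    (hmax.and hmin).mono fun z hz => le_antisymm hz.1 hz.2
  have hzero : f' =ᶠ[𝓝 x] fun _ => 0 :=
    hconst.eventuallyEq_nhds.mono fun z hz => by rw [← (hf z).deriv, hz.deriv_eq, deriv_const]
  have := hf'.congr_of_eventuallyEq hzero.symm
  exact hd.ne' (this.unique (hasDerivAt_const x 0))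

theorem abs_sub_sub_mul_le_of_hasDerivAt {f f' : ℝ → ℝ} {x y L : ℝ}
    (hf : ∀ z ∈ uIcc x (x + y), HasDerivAt f (f' z) z)
    (hL : ∀ z ∈ uIcc x (x + y), |f' z - f' x| ≤ L * |y|) :
    |f (x + y) - f x - y * f' x| ≤ L * y ^ 2 := by
  have hg : ∀ z ∈ uIcc x (x + y),
      HasDerivWithinAt (fun z => f z - z * f' x) (f' z - f' x) (uIcc x (x + y)) z :=
    fun z hz => (((hf z hz).sub ((hasDerivAt_id z).mul_const (f' x))).congr_deriv
      (by simp)).hasDerivWithinAt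
  have := (convex_uIcc x (x + y)).norm_image_sub_le_of_norm_hasDerivWithin_le hg hL
    left_mem_uIcc right_mem_uIcc
  simp only [Real.norm_eq_abs, add_sub_cancel_left] at this
  calc |f (x + y) - f x - y * f' x| = |f (x + y) - (x + y) * f' x - (f x - x * f' x)| := by
        ring_nf
    _ ≤ L * |y| * |y| := this
    _ = L * y ^ 2 := by rw [mul_assoc, abs_mul_abs_self, sq]

theorem HasDerivAt.exists_abs_sub_le {f : ℝ → ℝ} {d x : ℝ} (h : HasDerivAt f d x) :
    ∃ L ≥ 0, ∃ δ > 0, ∀ z, |z - x| < δ → |f z - f x| ≤ L * |z - x| := by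
  obtain ⟨L, hL0, hL⟩ := h.isBigO_sub.exists_nonneg
  obtain ⟨δ, hδ, hball⟩ := Metric.eventually_nhds_iff.1 (Asymptotics.isBigOWith_iff.1 hL)
  exact ⟨L, hL0, δ, hδ, fun z hz => by simpa using hball (by rwa [Real.dist_eq])⟩

theorem IsCompact.exists_isMaxOn_of_le {X Y : Type*} [TopologicalSpace X] [LinearOrder Y]
    [TopologicalSpace Y] [ClosedIciTopology Y] {s K : Set X} {f : X → Y} {x₁ : X}
    (hK : IsCompact K) (hx₁ : x₁ ∈ K) (hf : ContinuousOn f K)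
    (hout : ∀ x ∈ s \ K, f x ≤ f x₁) : ∃ x₀ ∈ K, IsMaxOn f s x₀ := by
  obtain ⟨x₀, hx₀, hmax⟩ := hK.exists_isMaxOn ⟨x₁, hx₁⟩ hf
  refine ⟨x₀, hx₀, fun x hx => ?_⟩
  by_cases hxK : x ∈ K
  · exact hmax hxK
  · exact (hout x ⟨hx, hxK⟩).trans (hmax hx₁)

noncomputable def bracket (x : ℝ) : ℝ := √(1 + x ^ 2)

noncomputable def bracketDeriv (x : ℝ) : ℝ := x / bracket x

theorem sq_bracket (x : ℝ) : bracket x ^ 2 = 1 + x ^ 2 := Real.sq_sqrt (by positivity)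

theorem one_le_bracket (x : ℝ) : 1 ≤ bracket x :=
  Real.one_le_sqrt.2 (by nlinarith)

theorem bracket_pos (x : ℝ) : 0 < bracket x := one_pos.trans_le (one_le_bracket x)

theorem abs_le_bracket (x : ℝ) : |x| ≤ bracket x :=
  Real.abs_le_sqrt (by linarith)

@[fun_prop]
theorem continuous_bracket : Continuous bracket := by
  unfold bracket; fun_prop

theorem hasDerivAt_bracket (x : ℝ) : HasDerivAt bracket (bracketDeriv x) x := by
  have h := ((hasDerivAt_pow 2 x).const_add 1).sqrt (by positivity : (1 : ℝ) + x ^ 2 ≠ 0)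
  refine h.congr_deriv ?_
  rw [bracketDeriv, bracket]
  field_simp
  norm_num

theorem abs_bracketDeriv_le_one (x : ℝ) : |bracketDeriv x| ≤ 1 := by
  rw [bracketDeriv, abs_div, abs_of_pos (bracket_pos x), div_le_one (bracket_pos x)]
  exact abs_le_bracket x

theorem hasDerivAt_bracketDeriv (x : ℝ) :
    HasDerivAt bracketDeriv (1 / bracket x ^ 3) x := by
  have hne := (bracket_pos x).ne'
  refine ((hasDerivAt_id x).div (hasDerivAt_bracket x) hne).congr_deriv ?_
  simp only [bracketDeriv, id]
  field_simp
  linarith [sq_bracket x]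

theorem one_div_bracket_pow_le_one (x : ℝ) : 1 / bracket x ^ 3 ≤ 1 :=
  div_le_one_of_le₀ (one_le_pow₀ (one_le_bracket x)) (pow_nonneg (bracket_pos x).le 3)

theorem abs_bracket_add_sub_le (x y : ℝ) : |bracket (x + y) - bracket x| ≤ |y| := by
  have := (convex_univ (𝕜 := ℝ)).norm_image_sub_le_of_norm_hasDerivWithin_le
    (fun z _ => (hasDerivAt_bracket z).hasDerivWithinAt) (fun z _ => abs_bracketDeriv_le_one z)
    (mem_univ x) (mem_univ (x + y))
  simpa using this

theorem abs_bracket_taylor_le (x y : ℝ) :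
    |bracket (x + y) - bracket x - y * bracketDeriv x| ≤ y ^ 2 := by
  have hLip : ∀ z, |bracketDeriv z - bracketDeriv x| ≤ |z - x| := fun z => by
    have := (convex_univ (𝕜 := ℝ)).norm_image_sub_le_of_norm_hasDerivWithin_le
      (fun z _ => (hasDerivAt_bracketDeriv z).hasDerivWithinAt)
      (fun z _ => by
        rw [Real.norm_eq_abs, abs_of_nonneg (by have := bracket_pos z; positivity)]
        exact one_div_bracket_pow_le_one z)
      (mem_univ x) (mem_univ z)
    simpa using this
  simpa using abs_sub_sub_mul_le_of_hasDerivAt (L := 1)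
    (fun z _ => hasDerivAt_bracket z)
    (fun z hz => (hLip z).trans (by simpa using abs_sub_left_of_mem_uIcc hz))

section LevyOperator

variable {ν : Measure ℝ}

/-- `d` plays the role of `f' x`: the Lévy operator is
`I f x = ∫ y, levyIntegrand f (f' x) x y ∂ν`. -/
noncomputable def levyIntegrand (f : ℝ → ℝ) (d x y : ℝ) : ℝ :=
  f (x + y) - f x - if |y| ≤ 1 then y * d else 0

/-- `min (y ^ 2) |y|`, written so that its integrability is the Lévy-measure hypothesis. -/
noncomputable def levyWeight (y : ℝ) : ℝ := if |y| ≤ 1 then y ^ 2 else |y|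

theorem levyWeight_nonneg (y : ℝ) : 0 ≤ levyWeight y := by
  unfold levyWeight; split_ifs <;> positivity

theorem integrable_levyWeight
    (h1 : IntegrableOn (fun y => y ^ 2) {y : ℝ | |y| ≤ 1} ν)
    (h2 : IntegrableOn (fun y => |y|) {y : ℝ | 1 < |y|} ν) : Integrable levyWeight ν := by
  have hs : MeasurableSet {y : ℝ | |y| ≤ 1} := measurableSet_le measurable_abs measurable_const
  have h2' : IntegrableOn (fun y => |y|) {y : ℝ | |y| ≤ 1}ᶜ ν := by
    simpa only [compl_ofPred, not_le] using h2
  rw [← integrableOn_univ, ← union_compl_self {y : ℝ | |y| ≤ 1}]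
  exact (h1.congr_fun (fun y hy => (if_pos hy).symm) hs).union
    (h2'.congr_fun (fun y hy => (if_neg hy).symm) hs.compl)

theorem measurable_levyIntegrand {f : ℝ → ℝ} (hf : Measurable f) (d x : ℝ) :
    Measurable (levyIntegrand f d x) := by
  unfold levyIntegrand
  exact ((hf.comp (measurable_const_add x)).sub_const _).sub
    (Measurable.ite (measurableSet_le measurable_abs measurable_const)
      (measurable_id.mul_const d) measurable_const)

theorem levyIntegrand_sub (f g : ℝ → ℝ) (d e x : ℝ) :
    levyIntegrand (fun z => f z - g z) (d - e) x =
      levyIntegrand f d x - levyIntegrand g e x := by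
  ext y
  simp only [levyIntegrand, Pi.sub_apply]
  split_ifs <;> ring

theorem abs_levyIntegrand_bracket_le (x y : ℝ) :
    |levyIntegrand bracket (bracketDeriv x) x y| ≤ levyWeight y := by
  unfold levyIntegrand levyWeight
  split_ifs
  · simpa using abs_bracket_taylor_le x y
  · simpa using abs_bracket_add_sub_le x y

theorem exists_abs_levyIntegrand_le {f f' : ℝ → ℝ} {M d x : ℝ} (hM : ∀ z, |f z| ≤ M)
    (hf : ∀ z, HasDerivAt f (f' z) z) (hf' : HasDerivAt f' d x) :
    ∃ C, ∀ y, |levyIntegrand f (f' x) x y| ≤ C * levyWeight y := by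
  obtain ⟨L, hL, δ, hδ, hloc⟩ := hf'.exists_abs_sub_le
  have hM0 : 0 ≤ M := (abs_nonneg _).trans (hM 0)
  have hinc : ∀ y, |f (x + y) - f x| ≤ 2 * M := fun y =>
    (abs_sub _ _).trans (by linarith [hM (x + y), hM x])
  -- quadratic near `0` by the local Lipschitz bound on `f'`, bounded elsewhere
  set B := 2 * M + |f' x|
  refine ⟨L + B / δ ^ 2 + 2 * M, fun y => ?_⟩
  have hBδ : 0 ≤ B / δ ^ 2 := by positivity
  unfold levyIntegrand levyWeight
  split_ifs with hy
  · have hsmall : |y| < δ → |f (x + y) - f x - y * f' x| ≤ L * y ^ 2 := fun hyδ =>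
      abs_sub_sub_mul_le_of_hasDerivAt (fun z _ => hf z) fun z hz =>
        (hloc z ((abs_sub_left_of_mem_uIcc hz).trans_lt (by simpa using hyδ))).trans
          (mul_le_mul_of_nonneg_left (by simpa using abs_sub_left_of_mem_uIcc hz) hL)
    have hlarge : δ ≤ |y| → |f (x + y) - f x - y * f' x| ≤ B / δ ^ 2 * y ^ 2 := fun hyδ => by
      have hδy : δ ^ 2 ≤ y ^ 2 := by simpa using pow_le_pow_left₀ hδ.le hyδ 2
      calc |f (x + y) - f x - y * f' x| ≤ 2 * M + |y| * |f' x| := by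
            refine (abs_sub _ _).trans ?_
            rw [abs_mul]; linarith [hinc y]
        _ ≤ B := by simp only [B]; nlinarith [abs_nonneg (f' x)]
        _ = B / δ ^ 2 * δ ^ 2 := by field_simp
        _ ≤ B / δ ^ 2 * y ^ 2 := by gcongr
    rcases lt_or_ge |y| δ with hyδ | hyδ
    · nlinarith [hsmall hyδ, sq_nonneg y]
    · nlinarith [hlarge hyδ, sq_nonneg y]
  · simp only [sub_zero]
    nlinarith [hinc y, abs_nonneg y]

theorem integrable_levyIntegrand_of_bounded
    (h1 : IntegrableOn (fun y => y ^ 2) {y : ℝ | |y| ≤ 1} ν)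
    (h2 : IntegrableOn (fun y => |y|) {y : ℝ | 1 < |y|} ν) {f f' : ℝ → ℝ} {M d x : ℝ}
    (hM : ∀ z, |f z| ≤ M) (hf : ∀ z, HasDerivAt f (f' z) z) (hf' : HasDerivAt f' d x) :
    Integrable (levyIntegrand f (f' x) x) ν := by
  obtain ⟨C, hC⟩ := exists_abs_levyIntegrand_le hM hf hf'
  have hcont : Continuous f := continuous_iff_continuousAt.2 fun z => (hf z).continuousAt
  exact ((integrable_levyWeight h1 h2).const_mul C).mono'
    (measurable_levyIntegrand hcont.measurable _ x).aestronglyMeasurable (ae_of_all _ hC)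

theorem integral_levyIntegrand_le_of_forall_sub_bracket_le
    (h1 : IntegrableOn (fun y => y ^ 2) {y : ℝ | |y| ≤ 1} ν)
    (h2 : IntegrableOn (fun y => |y|) {y : ℝ | 1 < |y|} ν) {f : ℝ → ℝ} {x ε : ℝ} (hε : 0 ≤ ε)
    (hmax : ∀ z, f z - ε * bracket z ≤ f x - ε * bracket x)
    (hint : Integrable (levyIntegrand f (ε * bracketDeriv x) x) ν) :
    ∫ y, levyIntegrand f (ε * bracketDeriv x) x y ∂ν ≤ ε * ∫ y, levyWeight y ∂ν := by
  have hpt : ∀ y, levyIntegrand f (ε * bracketDeriv x) x y ≤ ε * levyWeight y := fun y => by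
    have hle : levyIntegrand f (ε * bracketDeriv x) x y ≤
        ε * levyIntegrand bracket (bracketDeriv x) x y := by
      have := hmax (x + y)
      unfold levyIntegrand
      split_ifs <;> linarith
    nlinarith [(le_abs_self _).trans (abs_levyIntegrand_bracket_le x y)]
  rw [← integral_const_mul]
  exact integral_mono hint ((integrable_levyWeight h1 h2).const_mul ε) hpt

theorem generator_le_of_forall_sub_bracket_le
    (h1 : IntegrableOn (fun y => y ^ 2) {y : ℝ | |y| ≤ 1} ν)
    (h2 : IntegrableOn (fun y => |y|) {y : ℝ | 1 < |y|} ν) {f f' : ℝ → ℝ}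
    {x f'' ε α β A B : ℝ} (hε : 0 ≤ ε) (hα : 0 ≤ α) (hαA : α ≤ A) (hβB : |β| ≤ B)
    (hf : ∀ z, HasDerivAt f (f' z) z) (hf' : HasDerivAt f' f'' x)
    (hmax : ∀ z, f z - ε * bracket z ≤ f x - ε * bracket x)
    (hint : Integrable (levyIntegrand f (f' x) x) ν) :
    α * f'' + β * f' x + ∫ y, levyIntegrand f (f' x) x y ∂ν ≤
      ε * (A + B + ∫ y, levyWeight y ∂ν) := by
  have hloc : IsLocalMax (fun z => f z - ε * bracket z) x := Eventually.of_forall hmax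
  have hg : ∀ z, HasDerivAt (fun z => f z - ε * bracket z) (f' z - ε * bracketDeriv z) z :=
    fun z => (hf z).sub ((hasDerivAt_bracket z).const_mul ε)
  have hfx : f' x = ε * bracketDeriv x := sub_eq_zero.1 (hloc.hasDerivAt_eq_zero (hg x))
  have hfxx : f'' ≤ ε * (1 / bracket x ^ 3) := sub_nonpos.1
    (hloc.nonpos_of_hasDerivAt_of_hasDerivAt hg
      (hf'.sub ((hasDerivAt_bracketDeriv x).const_mul ε)))
  have hsecond : α * f'' ≤ ε * A := by
    have := one_div_bracket_pow_le_one x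
    have : 0 ≤ 1 / bracket x ^ 3 := by have := bracket_pos x; positivity
    calc α * f'' ≤ α * (ε * (1 / bracket x ^ 3)) := mul_le_mul_of_nonneg_left hfxx hα
      _ ≤ ε * A := by nlinarith [mul_nonneg hα hε]
  have hfirst : β * (ε * bracketDeriv x) ≤ ε * B :=
    calc β * (ε * bracketDeriv x) ≤ |β * (ε * bracketDeriv x)| := le_abs_self _
      _ = ε * (|β| * |bracketDeriv x|) := by rw [abs_mul, abs_mul, abs_of_nonneg hε]; ring
      _ ≤ ε * B := mul_le_mul_of_nonneg_left
          ((mul_le_of_le_one_right (abs_nonneg β) (abs_bracketDeriv_le_one x)).trans hβB) hε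
  rw [hfx] at hint ⊢
  have hnonlocal := integral_levyIntegrand_le_of_forall_sub_bracket_le h1 h2 hε hmax hint
  linarith

theorem generator_lt_of_isMaxOn_sub_barrier
    (h1 : IntegrableOn (fun y => y ^ 2) {y : ℝ | |y| ≤ 1} ν)
    (h2 : IntegrableOn (fun y => |y|) {y : ℝ | 1 < |y|} ν) {w : ℝ → ℝ → ℝ} {wx : ℝ → ℝ}
    {T x₀ t₀ wt wxx ε K α β A B : ℝ} (hε : 0 < ε) (hK : A + B + ∫ y, levyWeight y ∂ν < K)
    (hα : 0 ≤ α) (hαA : α ≤ A) (hβB : |β| ≤ B) (ht₀ : t₀ ∈ Ioc 0 T)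
    (hmax : IsMaxOn (fun q : ℝ × ℝ => w q.1 q.2 - ε * (bracket q.1 + K * q.2))
      (univ ×ˢ Icc 0 T) (x₀, t₀))
    (hwt : HasDerivAt (w x₀ ·) wt t₀) (hwx : ∀ z, HasDerivAt (w · t₀) (wx z) z)
    (hwxx : HasDerivAt wx wxx x₀) (hint : Integrable (levyIntegrand (w · t₀) (wx x₀) x₀) ν) :
    α * wxx + β * wx x₀ + ∫ y, levyIntegrand (w · t₀) (wx x₀) x₀ y ∂ν < wt := by
  have htime : ε * K ≤ wt := by
    have hu : HasDerivAt (fun s => w x₀ s - ε * (bracket x₀ + K * s)) (wt - ε * K) t₀ :=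
      (hwt.sub ((((hasDerivAt_id t₀).const_mul K).const_add _).const_mul ε)).congr_deriv
        (by simp)
    have := hu.nonneg_of_isMaxOn_Icc ht₀.1 fun s hs =>
      @hmax (x₀, s) ⟨mem_univ _, hs.1, hs.2.trans ht₀.2⟩
    linarith
  have hspace := generator_le_of_forall_sub_bracket_le h1 h2 hε.le hα hαA hβB hwx hwxx
    (fun z => by
      have := @hmax (z, t₀) ⟨mem_univ _, Ioc_subset_Icc_self ht₀⟩
      simp only [mem_ofPred_eq] at this
      linarith) hint
  nlinarith

theorem exists_isMaxOn_sub_barrier {w : ℝ → ℝ → ℝ} {T M ε K x₁ t₁ : ℝ} (hε : 0 < ε)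
    (hK : 0 ≤ K)
    (hcw : ContinuousOn (fun q : ℝ × ℝ => w q.1 q.2) (univ ×ˢ Icc 0 T))
    (hM : ∀ x, ∀ t ∈ Icc 0 T, w x t ≤ M) (ht₁ : t₁ ∈ Icc 0 T)
    (hpos : 0 < w x₁ t₁ - ε * (bracket x₁ + K * t₁)) :
    ∃ q ∈ univ ×ˢ Icc 0 T,
      IsMaxOn (fun q : ℝ × ℝ => w q.1 q.2 - ε * (bracket q.1 + K * q.2))
        (univ ×ˢ Icc 0 T) q := by
  set R := max |x₁| (M / ε)
  have hR : M ≤ ε * R := by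
    rw [← div_le_iff₀' hε]; exact le_max_right _ _
  have hbox : IsCompact (Icc (-R) R ×ˢ Icc 0 T) := isCompact_Icc.prod isCompact_Icc
  obtain ⟨q, hq, hmax⟩ := hbox.exists_isMaxOn_of_le (s := univ ×ˢ Icc 0 T) (x₁ := (x₁, t₁))
    (f := fun q : ℝ × ℝ => w q.1 q.2 - ε * (bracket q.1 + K * q.2))
    ⟨abs_le.1 (le_max_left _ _), ht₁⟩
    ((hcw.mono (prod_mono (subset_univ _) subset_rfl)).sub
      (Continuous.continuousOn (by fun_prop)))
    (by
      rintro ⟨x, t⟩ ⟨⟨-, ht⟩, hxR⟩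
      have hRx : R < |x| := by
        by_contra! hxR'
        exact hxR ⟨abs_le.1 hxR', ht⟩
      have := hM x t ht
      have := abs_le_bracket x
      nlinarith [mul_nonneg hK ht.1])
  exact ⟨q, prod_mono (subset_univ _) subset_rfl hq, hmax⟩

theorem subsolution_nonpos {T Ma Mb M : ℝ} {a b w wt wx wxx : ℝ → ℝ → ℝ}
    (ha_nonneg : ∀ x, ∀ t ∈ Icc 0 T, 0 ≤ a x t) (ha_le : ∀ x, ∀ t ∈ Icc 0 T, a x t ≤ Ma)
    (hb_bd : ∀ x, ∀ t ∈ Icc 0 T, |b x t| ≤ Mb)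
    (h1 : IntegrableOn (fun y => y ^ 2) {y : ℝ | |y| ≤ 1} ν)
    (h2 : IntegrableOn (fun y => |y|) {y : ℝ | 1 < |y|} ν)
    (hcw : ContinuousOn (fun q : ℝ × ℝ => w q.1 q.2) (univ ×ˢ Icc 0 T))
    (hM : ∀ x, ∀ t ∈ Icc 0 T, w x t ≤ M) (hw0 : ∀ x, w x 0 ≤ 0)
    (hwt : ∀ x, ∀ t ∈ Ioc 0 T, HasDerivAt (w x ·) (wt x t) t)
    (hwx : ∀ x, ∀ t ∈ Ioc 0 T, HasDerivAt (w · t) (wx x t) x)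
    (hwxx : ∀ x, ∀ t ∈ Ioc 0 T, HasDerivAt (wx · t) (wxx x t) x)
    (hint : ∀ x, ∀ t ∈ Ioc 0 T, Integrable (levyIntegrand (w · t) (wx x t) x) ν)
    (hsub : ∀ x, ∀ t ∈ Ioc 0 T, 0 < w x t →
      wt x t ≤ a x t * wxx x t + b x t * wx x t +
        ∫ y, levyIntegrand (w · t) (wx x t) x y ∂ν) :
    ∀ x, ∀ t ∈ Icc 0 T, w x t ≤ 0 := by
  intro x t ht
  set K := Ma + Mb + ∫ y, levyWeight y ∂ν + 1
  have hK : 0 ≤ K := by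
    have : 0 ≤ ∫ y, levyWeight y ∂ν := integral_nonneg levyWeight_nonneg
    linarith [(ha_nonneg x t ht).trans (ha_le x t ht), (abs_nonneg _).trans (hb_bd x t ht)]
  have hc : 0 < bracket x + K * t := by nlinarith [bracket_pos x, ht.1]
  suffices hε : ∀ ε > 0, w x t ≤ ε * (bracket x + K * t) by
    refine le_of_forall_pos_le_add fun δ hδ => ?_
    simpa [div_mul_cancel₀ _ hc.ne'] using hε (δ / (bracket x + K * t)) (by positivity)
  intro ε hε
  by_contra! hlt
  have hu : 0 < w x t - ε * (bracket x + K * t) := by linarith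
  obtain ⟨⟨x₀, t₀⟩, ⟨-, ht₀⟩, hmax⟩ := exists_isMaxOn_sub_barrier hε hK hcw hM ht hu
  have hu₀ : 0 < w x₀ t₀ - ε * (bracket x₀ + K * t₀) :=
    hu.trans_le (@hmax (x, t) ⟨mem_univ _, ht⟩)
  have ht₀pos : 0 < t₀ := by
    refine ht₀.1.lt_of_ne fun h => ?_
    subst h
    nlinarith [hw0 x₀, bracket_pos x₀]
  have ht₀' : t₀ ∈ Ioc 0 T := ⟨ht₀pos, ht₀.2⟩
  have hw₀ : 0 < w x₀ t₀ := by nlinarith [bracket_pos x₀, mul_nonneg hK ht₀.1]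
  exact (hsub x₀ t₀ ht₀' hw₀).not_gt <| generator_lt_of_isMaxOn_sub_barrier h1 h2 hε
    (by linarith) (ha_nonneg x₀ t₀ ht₀) (ha_le x₀ t₀ ht₀) (hb_bd x₀ t₀ ht₀) ht₀' hmax
    (hwt x₀ t₀ ht₀') (fun z => hwx z t₀ ht₀') (hwxx x₀ t₀ ht₀') (hint x₀ t₀ ht₀')

theorem le_of_subsolution_of_supersolution {T Ma Mb M₁ M₂ : ℝ} {a b r : ℝ → ℝ → ℝ} {p g : ℝ → ℝ}
    {v₁ v₂ v₁t v₁x v₁xx v₂t v₂x v₂xx : ℝ → ℝ → ℝ}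
    (ha_nonneg : ∀ x, ∀ t ∈ Icc 0 T, 0 ≤ a x t) (ha_le : ∀ x, ∀ t ∈ Icc 0 T, a x t ≤ Ma)
    (hb_bd : ∀ x, ∀ t ∈ Icc 0 T, |b x t| ≤ Mb) (hr_nonneg : ∀ x, ∀ t ∈ Icc 0 T, 0 ≤ r x t)
    (h1 : IntegrableOn (fun y => y ^ 2) {y : ℝ | |y| ≤ 1} ν)
    (h2 : IntegrableOn (fun y => |y|) {y : ℝ | 1 < |y|} ν) (hp : Monotone p)
    (hc₁ : ContinuousOn (fun q : ℝ × ℝ => v₁ q.1 q.2) (univ ×ˢ Icc 0 T))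
    (hc₂ : ContinuousOn (fun q : ℝ × ℝ => v₂ q.1 q.2) (univ ×ˢ Icc 0 T))
    (hbd₁ : ∀ x, ∀ t ∈ Icc 0 T, |v₁ x t| ≤ M₁) (hbd₂ : ∀ x, ∀ t ∈ Icc 0 T, |v₂ x t| ≤ M₂)
    (hv₁t : ∀ x, ∀ t ∈ Ioc 0 T, HasDerivAt (v₁ x ·) (v₁t x t) t)
    (hv₁x : ∀ x, ∀ t ∈ Ioc 0 T, HasDerivAt (v₁ · t) (v₁x x t) x)
    (hv₁xx : ∀ x, ∀ t ∈ Ioc 0 T, HasDerivAt (v₁x · t) (v₁xx x t) x)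
    (hv₂t : ∀ x, ∀ t ∈ Ioc 0 T, HasDerivAt (v₂ x ·) (v₂t x t) t)
    (hv₂x : ∀ x, ∀ t ∈ Ioc 0 T, HasDerivAt (v₂ · t) (v₂x x t) x)
    (hv₂xx : ∀ x, ∀ t ∈ Ioc 0 T, HasDerivAt (v₂x · t) (v₂xx x t) x)
    (hsub₁ : ∀ x, ∀ t ∈ Ioc 0 T,
      v₁t x t - a x t * v₁xx x t - b x t * v₁x x t -
        (∫ y, levyIntegrand (v₁ · t) (v₁x x t) x y ∂ν) + r x t * v₁ x t + p (v₁ x t - g x) ≤ 0)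
    (hsuper₂ : ∀ x, ∀ t ∈ Ioc 0 T,
      0 ≤ v₂t x t - a x t * v₂xx x t - b x t * v₂x x t -
        (∫ y, levyIntegrand (v₂ · t) (v₂x x t) x y ∂ν) + r x t * v₂ x t + p (v₂ x t - g x))
    (h0 : ∀ x, v₁ x 0 ≤ v₂ x 0) :
    ∀ x, ∀ t ∈ Icc 0 T, v₁ x t ≤ v₂ x t := by
  have hI₁ : ∀ x, ∀ t ∈ Ioc 0 T, Integrable (levyIntegrand (v₁ · t) (v₁x x t) x) ν :=
    fun x t ht => integrable_levyIntegrand_of_bounded h1 h2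
      (fun z => hbd₁ z t (Ioc_subset_Icc_self ht)) (fun z => hv₁x z t ht) (hv₁xx x t ht)
  have hI₂ : ∀ x, ∀ t ∈ Ioc 0 T, Integrable (levyIntegrand (v₂ · t) (v₂x x t) x) ν :=
    fun x t ht => integrable_levyIntegrand_of_bounded h1 h2
      (fun z => hbd₂ z t (Ioc_subset_Icc_self ht)) (fun z => hv₂x z t ht) (hv₂xx x t ht)
  have hdiff := subsolution_nonpos (w := fun x t => v₁ x t - v₂ x t)
    (wt := fun x t => v₁t x t - v₂t x t) (wx := fun x t => v₁x x t - v₂x x t)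
    (wxx := fun x t => v₁xx x t - v₂xx x t) (M := M₁ + M₂)
    ha_nonneg ha_le hb_bd h1 h2 (hc₁.sub hc₂)
    (fun x t ht => by linarith [(abs_le.1 (hbd₁ x t ht)).2, (abs_le.1 (hbd₂ x t ht)).1])
    (fun x => sub_nonpos.2 (h0 x))
    (fun x t ht => (hv₁t x t ht).sub (hv₂t x t ht))
    (fun x t ht => (hv₁x x t ht).sub (hv₂x x t ht))
    (fun x t ht => (hv₁xx x t ht).sub (hv₂xx x t ht))
    (fun x t ht => by rw [levyIntegrand_sub]; exact (hI₁ x t ht).sub (hI₂ x t ht))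
    (fun x t ht hw => by
      rw [levyIntegrand_sub, integral_sub' (hI₁ x t ht) (hI₂ x t ht)]
      have := hsub₁ x t ht
      have := hsuper₂ x t ht
      have := mul_nonneg (hr_nonneg x t (Ioc_subset_Icc_self ht)) hw.le
      have := hp (by linarith : v₂ x t - g x ≤ v₁ x t - g x)
      linarith)
  exact fun x t ht => sub_nonpos.1 (hdiff x t ht)

end LevyOperator

theorem stmt_15_general
    (T : ℝ)
    (a b r : ℝ → ℝ → ℝ) (Ma Mb : ℝ)
    (ha_pos : ∀ x : ℝ, ∀ t ∈ Icc (0:ℝ) T, 0 < a x t)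
    (ha_bd : ∀ x : ℝ, ∀ t ∈ Icc (0:ℝ) T, |a x t| ≤ Ma)
    (hb_bd : ∀ x : ℝ, ∀ t ∈ Icc (0:ℝ) T, |b x t| ≤ Mb)
    (hr_nonneg : ∀ x : ℝ, ∀ t ∈ Icc (0:ℝ) T, 0 ≤ r x t)
    (ν : Measure ℝ)
    (h1 : IntegrableOn (fun y => y ^ 2) {y : ℝ | |y| ≤ 1} ν)
    (h2 : IntegrableOn (fun y => |y|) {y : ℝ | 1 < |y|} ν)
    (p : ℝ → ℝ) (hp : ContDiff ℝ 1 p) (hp' : ∀ y : ℝ, 0 ≤ deriv p y)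
    (g : ℝ → ℝ)
    (v₁ v₂ v₁t v₁x v₁xx v₂t v₂x v₂xx : ℝ → ℝ → ℝ)
    (hc₁ : ContinuousOn (fun q : ℝ × ℝ => v₁ q.1 q.2) (univ ×ˢ Icc 0 T))
    (hc₂ : ContinuousOn (fun q : ℝ × ℝ => v₂ q.1 q.2) (univ ×ˢ Icc 0 T))
    (M₁ : ℝ) (hbd₁ : ∀ x : ℝ, ∀ t ∈ Icc (0:ℝ) T, |v₁ x t| ≤ M₁)
    (M₂ : ℝ) (hbd₂ : ∀ x : ℝ, ∀ t ∈ Icc (0:ℝ) T, |v₂ x t| ≤ M₂)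
    (hv₁t : ∀ x : ℝ, ∀ t ∈ Ioc (0:ℝ) T, HasDerivAt (fun s => v₁ x s) (v₁t x t) t)
    (hv₁x : ∀ x : ℝ, ∀ t ∈ Ioc (0:ℝ) T, HasDerivAt (fun z => v₁ z t) (v₁x x t) x)
    (hv₁xx : ∀ x : ℝ, ∀ t ∈ Ioc (0:ℝ) T, HasDerivAt (fun z => v₁x z t) (v₁xx x t) x)
    (hv₂t : ∀ x : ℝ, ∀ t ∈ Ioc (0:ℝ) T, HasDerivAt (fun s => v₂ x s) (v₂t x t) t)
    (hv₂x : ∀ x : ℝ, ∀ t ∈ Ioc (0:ℝ) T, HasDerivAt (fun z => v₂ z t) (v₂x x t) x)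
    (hv₂xx : ∀ x : ℝ, ∀ t ∈ Ioc (0:ℝ) T, HasDerivAt (fun z => v₂x z t) (v₂xx x t) x)
    (heq₁ : ∀ x : ℝ, ∀ t ∈ Ioc (0:ℝ) T,
      v₁t x t - a x t * v₁xx x t - b x t * v₁x x t -
        (∫ y, (v₁ (x + y) t - v₁ x t - (if |y| ≤ 1 then y * v₁x x t else 0)) ∂ν) +
        r x t * v₁ x t + p (v₁ x t - g x) = 0)
    (heq₂ : ∀ x : ℝ, ∀ t ∈ Ioc (0:ℝ) T,
      v₂t x t - a x t * v₂xx x t - b x t * v₂x x t -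
        (∫ y, (v₂ (x + y) t - v₂ x t - (if |y| ≤ 1 then y * v₂x x t else 0)) ∂ν) +
        r x t * v₂ x t + p (v₂ x t - g x) = 0)
    (h0 : ∀ x : ℝ, v₁ x 0 = v₂ x 0) :
    ∀ x : ℝ, ∀ t ∈ Icc (0:ℝ) T, v₁ x t = v₂ x t := by
  have hp_mono : Monotone p := monotone_of_deriv_nonneg (hp.differentiable one_ne_zero) hp'
  have ha_nonneg : ∀ x, ∀ t ∈ Icc 0 T, 0 ≤ a x t := fun x t ht => (ha_pos x t ht).le
  have ha_le : ∀ x, ∀ t ∈ Icc 0 T, a x t ≤ Ma := fun x t ht => le_of_abs_le (ha_bd x t ht)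
  intro x t ht
  exact le_antisymm
    (le_of_subsolution_of_supersolution ha_nonneg ha_le hb_bd hr_nonneg h1 h2 hp_mono
      hc₁ hc₂ hbd₁ hbd₂ hv₁t hv₁x hv₁xx hv₂t hv₂x hv₂xx (fun x t ht => (heq₁ x t ht).le)
      (fun x t ht => (heq₂ x t ht).ge) (fun x => (h0 x).le) x t ht)
    (le_of_subsolution_of_supersolution ha_nonneg ha_le hb_bd hr_nonneg h1 h2 hp_mono
      hc₂ hc₁ hbd₂ hbd₁ hv₂t hv₂x hv₂xx hv₁t hv₁x hv₁xx (fun x t ht => (heq₂ x t ht).le)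
      (fun x t ht => (heq₁ x t ht).ge) (fun x => (h0 x).ge) x t ht)

theorem stmt_15
    (T : ℝ) (hT : 0 < T)
    (a b r : ℝ → ℝ → ℝ) (Ma Mb Mr : ℝ)
    (ha_pos : ∀ x : ℝ, ∀ t ∈ Icc (0:ℝ) T, 0 < a x t)
    (ha_bd : ∀ x : ℝ, ∀ t ∈ Icc (0:ℝ) T, |a x t| ≤ Ma)
    (hb_bd : ∀ x : ℝ, ∀ t ∈ Icc (0:ℝ) T, |b x t| ≤ Mb)
    (hr_nonneg : ∀ x : ℝ, ∀ t ∈ Icc (0:ℝ) T, 0 ≤ r x t)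
    (hr_bd : ∀ x : ℝ, ∀ t ∈ Icc (0:ℝ) T, r x t ≤ Mr)
    (ν : Measure ℝ)
    (h1 : IntegrableOn (fun y => y ^ 2) {y : ℝ | |y| ≤ 1} ν)
    (h2 : IntegrableOn (fun y => |y|) {y : ℝ | 1 < |y|} ν)
    (p : ℝ → ℝ) (hp : ContDiff ℝ 1 p) (hp' : ∀ y : ℝ, 0 ≤ deriv p y)
    (g : ℝ → ℝ)
    (v₁ v₂ v₁t v₁x v₁xx v₂t v₂x v₂xx : ℝ → ℝ → ℝ)
    (hc₁ : ContinuousOn (fun q : ℝ × ℝ => v₁ q.1 q.2) (univ ×ˢ Icc 0 T))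
    (hc₂ : ContinuousOn (fun q : ℝ × ℝ => v₂ q.1 q.2) (univ ×ˢ Icc 0 T))
    (M₁ : ℝ) (hbd₁ : ∀ x : ℝ, ∀ t ∈ Icc (0:ℝ) T, |v₁ x t| ≤ M₁)
    (M₂ : ℝ) (hbd₂ : ∀ x : ℝ, ∀ t ∈ Icc (0:ℝ) T, |v₂ x t| ≤ M₂)
    (hv₁t : ∀ x : ℝ, ∀ t ∈ Ioc (0:ℝ) T, HasDerivAt (fun s => v₁ x s) (v₁t x t) t)
    (hv₁x : ∀ x : ℝ, ∀ t ∈ Ioc (0:ℝ) T, HasDerivAt (fun z => v₁ z t) (v₁x x t) x)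
    (hv₁xx : ∀ x : ℝ, ∀ t ∈ Ioc (0:ℝ) T, HasDerivAt (fun z => v₁x z t) (v₁xx x t) x)
    (hv₂t : ∀ x : ℝ, ∀ t ∈ Ioc (0:ℝ) T, HasDerivAt (fun s => v₂ x s) (v₂t x t) t)
    (hv₂x : ∀ x : ℝ, ∀ t ∈ Ioc (0:ℝ) T, HasDerivAt (fun z => v₂ z t) (v₂x x t) x)
    (hv₂xx : ∀ x : ℝ, ∀ t ∈ Ioc (0:ℝ) T, HasDerivAt (fun z => v₂x z t) (v₂xx x t) x)
    (heq₁ : ∀ x : ℝ, ∀ t ∈ Ioc (0:ℝ) T,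
      v₁t x t - a x t * v₁xx x t - b x t * v₁x x t -
        (∫ y, (v₁ (x + y) t - v₁ x t - (if |y| ≤ 1 then y * v₁x x t else 0)) ∂ν) +
        r x t * v₁ x t + p (v₁ x t - g x) = 0)
    (heq₂ : ∀ x : ℝ, ∀ t ∈ Ioc (0:ℝ) T,
      v₂t x t - a x t * v₂xx x t - b x t * v₂x x t -
        (∫ y, (v₂ (x + y) t - v₂ x t - (if |y| ≤ 1 then y * v₂x x t else 0)) ∂ν) +
        r x t * v₂ x t + p (v₂ x t - g x) = 0)
    (h0 : ∀ x : ℝ, v₁ x 0 = v₂ x 0) :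
    ∀ x : ℝ, ∀ t ∈ Icc (0:ℝ) T, v₁ x t = v₂ x t :=
  stmt_15_general T a b r Ma Mb ha_pos ha_bd hb_bd hr_nonneg ν h1 h2 p hp hp' g v₁ v₂ v₁t v₁x v₁xx
    v₂t v₂x v₂xx hc₁ hc₂ M₁ hbd₁ M₂ hbd₂ hv₁t hv₁x hv₁xx hv₂t hv₂x hv₂xx heq₁ heq₂ h0
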